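/- arXiv:2205.09986 — 3 statements merged into one kernel-verified Lean document; each statement's English description precedes it below -/
import Mathlib

section
/- In an ensemble of m voters where the plurality class y receives c_y votes and the second most common class y' receives c_{y'} votes (so c_y ≥ c_{y'}), an adversary who may arbitrarily change the votes of at most t voters, with t ≤ ⌈(c_y − c_{y'})/2⌉ − 1, cannot make any class other than y receive strictly more votes than y. In particular y remains a plurality winner of the perturbed vote. -/
/-- Number of voters voting for class `z`. -/
def voteCount {m : ℕ} {C : Type*} [DecidableEq C] (v : Fin m → C) (z : C) : ℕ :=
  (Finset.univ.filter (fun i => v i = z)).card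

lemma voteCount_le_add {m : ℕ} {C : Type*} [DecidableEq C] (a b : Fin m → C) (z : C) :
    voteCount a z ≤ voteCount b z + (Finset.univ.filter (fun i => a i ≠ b i)).card := by
  unfold voteCount
  calc (Finset.univ.filter (fun i => a i = z)).card
      ≤ ((Finset.univ.filter (fun i => b i = z)) ∪
         (Finset.univ.filter (fun i => a i ≠ b i))).card := by
        apply Finset.card_le_card
        intro i hi
        simp only [Finset.mem_filter, Finset.mem_union, Finset.mem_univ, true_and] at *
        by_cases h : a i = b i
        · left; rw [← h]; exact hi
        · right; exact h
    _ ≤ _ := Finset.card_union_le _ _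

/-- if `y` is a plurality winner with `c_y` votes and the runner-up count is
`c_y'`, then changing at most `t ≤ ⌈(c_y - c_y')/2⌉ - 1` votes cannot make any other class
receive strictly more votes than `y`. -/
theorem plurality_robust_to_flips
    {m : ℕ} {C : Type*} [Fintype C] [DecidableEq C]
    (v w : Fin m → C) (y : C) (cy cy' : ℕ) (t : ℕ)
    (hcy : voteCount v y = cy)
    (hmax : ∀ z : C, voteCount v z ≤ cy)
    (hcy' : ∀ z : C, z ≠ y → voteCount v z ≤ cy')
    (hle : cy' ≤ cy)
    (ht : (t : ℤ) ≤ ⌈(((cy : ℚ) - (cy' : ℚ)) / 2)⌉ - 1)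
    (hdiff : (Finset.univ.filter (fun i => w i ≠ v i)).card ≤ t) :
    ∀ z : C, z ≠ y → voteCount w z ≤ voteCount w y := by
  intro z hz
  -- key arithmetic: 2*t + 1 ≤ cy - cy'
  have hceil : (⌈(((cy : ℚ) - (cy' : ℚ)) / 2)⌉ : ℚ) < ((cy : ℚ) - (cy' : ℚ)) / 2 + 1 :=
    Int.ceil_lt_add_one _
  have harith : 2 * t + cy' < cy := by
    have h1 : ((t : ℚ)) ≤ (⌈(((cy : ℚ) - (cy' : ℚ)) / 2)⌉ : ℚ) - 1 := by
      exact_mod_cast ht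
    have h2 : (2 * t + cy' : ℚ) < cy := by linarith
    exact_mod_cast h2
  have hD := hdiff
  have h1 : voteCount w z ≤ voteCount v z + (Finset.univ.filter (fun i => w i ≠ v i)).card := by
    have := voteCount_le_add w v z
    simpa using this
  have h2 : voteCount v y ≤ voteCount w y + (Finset.univ.filter (fun i => w i ≠ v i)).card := by
    have := voteCount_le_add v w y
    have hset : (Finset.univ.filter (fun i => v i ≠ w i)) =
        (Finset.univ.filter (fun i => w i ≠ v i)) := by
      apply Finset.filter_congr
      intro i _
      constructor <;> intro h <;> exact fun e => h e.symm
    rwa [hset] at this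
  have h3 := hcy' z hz
  omega
end

section
/- To change the plurality winner of an m-voter ensemble from class y (with c_y votes) to a specific class y' (with c_{y'} ≤ c_y votes), at least ⌈(c_y − c_{y'})/2⌉ voters' votes must be changed: if a new vote assignment differs from the original in fewer than ⌈(c_y − c_{y'})/2⌉ coordinates, then the new count of y' does not strictly exceed the new count of y. -/
/-- to make `y'` overtake `y`, at least `⌈(c_y - c_y')/2⌉` votes must change:
if fewer than that many coordinates differ, the new count of `y'` does not exceed that of `y`. -/
theorem flips_lower_bound_for_winner_change
    {m : ℕ} {C : Type*} [Fintype C] [DecidableEq C]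
    (v w : Fin m → C) (y y' : C) (cy cy' : ℕ)
    (hcy : voteCount v y = cy)
    (hcy' : voteCount v y' = cy')
    (hle : cy' ≤ cy)
    (hdiff : ((Finset.univ.filter (fun i => w i ≠ v i)).card : ℤ)
      < ⌈(((cy : ℚ) - (cy' : ℚ)) / 2)⌉) :
    voteCount w y' ≤ voteCount w y := by
  classical
  set S := Finset.univ.filter (fun i => w i ≠ v i) with hS
  have hA : voteCount v y ≤ voteCount w y + S.card := by
    have hsub : Finset.univ.filter (fun i => v i = y) ⊆
        Finset.univ.filter (fun i => w i = y) ∪ S := by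
      intro i hi
      simp only [Finset.mem_filter, Finset.mem_union, Finset.mem_univ, true_and, hS] at *
      by_cases h : w i = v i
      · left; rw [h, hi]
      · right; exact h
    calc voteCount v y ≤ (Finset.univ.filter (fun i => w i = y) ∪ S).card :=
          Finset.card_le_card hsub
      _ ≤ voteCount w y + S.card := Finset.card_union_le _ _
  have hB : voteCount w y' ≤ voteCount v y' + S.card := by
    have hsub : Finset.univ.filter (fun i => w i = y') ⊆
        Finset.univ.filter (fun i => v i = y') ∪ S := by
      intro i hi
      simp only [Finset.mem_filter, Finset.mem_union, Finset.mem_univ, true_and, hS] at *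
      by_cases h : w i = v i
      · left; rw [← h, hi]
      · right; exact h
    calc voteCount w y' ≤ (Finset.univ.filter (fun i => v i = y') ∪ S).card :=
          Finset.card_le_card hsub
      _ ≤ voteCount v y' + S.card := Finset.card_union_le _ _
  have hk : (S.card : ℚ) < ((cy : ℚ) - cy') / 2 := by
    have := Int.lt_ceil.mp hdiff
    exact_mod_cast this
  have h2k : 2 * S.card + cy' ≤ cy := by
    have h : ((2 * S.card + cy' : ℕ) : ℚ) < ((cy : ℕ) : ℚ) := by push_cast; linarith
    exact_mod_cast h.le
  omega
end

section
/- Robust accuracy of a poisoned ensemble: let m, t ∈ ℕ with t < m, let 0 < p < 1/2 with t < m(1 − 2p)/(2(1 − p)), and let X ~ Binomial(m − t, p) model the number of errors of the clean models, each clean model erring independently with probability p. Then the probability that the majority vote of the m models is correct, assuming all t poisoned models always err, is at least 1 − exp(−δ'²·μ'/(2 + δ')), where μ' = (m − t)p and δ' = (m − 2t)/(2μ') − 1; that is, P[X < m/2 − t] > 1 − exp(−δ'²·μ'/(2 + δ')). -/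
open Finset Real

/-! Chernoff's method for `X ~ Binomial(n, p)` with `s = 1 + δ`: Markov's inequality for `s ^ X`
gives `P[X ≥ (1 + δ) μ] ≤ (1 + p δ) ^ n / s ^ ((1 + δ) μ)`, which is less than
`exp (μ δ - (1 + δ) μ log (1 + δ))`, and `log (1 + δ) ≥ 2 δ / (2 + δ)` turns the exponent into
`-δ² μ / (2 + δ)`. The ensemble errs exactly when the clean errors reach
`m / 2 - t = (1 + δ') μ'`, and `δ' > 0` is the hypothesis on `t`. -/

noncomputable def binomialWeight (n : ℕ) (p : ℝ) (k : ℕ) : ℝ :=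
  p ^ k * (1 - p) ^ (n - k) * n.choose k

theorem sum_fin_pow_mul_pow_mul_choose {R : Type*} [CommSemiring R] (x y : R) (n : ℕ) :
    ∑ k : Fin (n + 1), x ^ (k : ℕ) * y ^ (n - k) * n.choose k = (x + y) ^ n := by
  rw [add_pow, Fin.sum_univ_eq_sum_range (fun k => x ^ k * y ^ (n - k) * n.choose k)]

theorem binomialWeight_nonneg {n : ℕ} {p : ℝ} (hp0 : 0 ≤ p) (hp1 : p ≤ 1) (k : ℕ) :
    0 ≤ binomialWeight n p k := by
  unfold binomialWeight
  have : 0 ≤ 1 - p := by linarith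
  positivity

theorem sum_binomialWeight (n : ℕ) (p : ℝ) : ∑ k : Fin (n + 1), binomialWeight n p k = 1 := by
  simp only [binomialWeight, sum_fin_pow_mul_pow_mul_choose, add_sub_cancel, one_pow]

/-- Markov's inequality applied to `s ^ X`, whose mean is `(p s + 1 - p) ^ n`. -/
theorem sum_binomialWeight_mul_rpow_le {n : ℕ} {p : ℝ} (hp0 : 0 ≤ p) (hp1 : p ≤ 1) {s : ℝ}
    (hs : 1 ≤ s) (a : ℝ) :
    (∑ k ∈ univ.filter (fun k : Fin (n + 1) => a ≤ k), binomialWeight n p k) * s ^ a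
      ≤ (p * s + (1 - p)) ^ n := by
  calc (∑ k ∈ univ.filter (fun k : Fin (n + 1) => a ≤ k), binomialWeight n p k) * s ^ a
      ≤ ∑ k ∈ univ.filter (fun k : Fin (n + 1) => a ≤ k),
          binomialWeight n p k * s ^ (k : ℕ) := by
        rw [sum_mul]
        refine sum_le_sum fun k hk =>
          mul_le_mul_of_nonneg_left ?_ (binomialWeight_nonneg hp0 hp1 k)
        rw [← rpow_natCast]
        exact rpow_le_rpow_of_exponent_le hs (mem_filter.mp hk).2
    _ ≤ ∑ k : Fin (n + 1), binomialWeight n p k * s ^ (k : ℕ) :=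
        sum_le_sum_of_subset_of_nonneg (filter_subset _ _) fun k _ _ =>
          mul_nonneg (binomialWeight_nonneg hp0 hp1 k) (by positivity)
    _ = (p * s + (1 - p)) ^ n := by
        rw [← sum_fin_pow_mul_pow_mul_choose]
        refine sum_congr rfl fun k _ => ?_
        rw [binomialWeight, mul_pow]
        ring

theorem one_add_pow_lt_exp {x : ℝ} (hx0 : 0 ≤ x) (hx : x ≠ 0) {n : ℕ} (hn : n ≠ 0) :
    (1 + x) ^ n < exp (n * x) := by
  rw [exp_nat_mul]
  exact pow_lt_pow_left₀ (by linarith [add_one_lt_exp hx]) (by linarith) hn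

theorem exp_mul_le_one_add_rpow {a δ : ℝ} (ha : 0 ≤ a) (hδ : 0 ≤ δ) :
    exp (a * (2 * δ / (δ + 2))) ≤ (1 + δ) ^ a := by
  rw [rpow_def_of_pos (by linarith), exp_le_exp, mul_comm (log _)]
  exact mul_le_mul_of_nonneg_left (le_log_one_add_of_nonneg hδ) ha

theorem binomialWeight_upperTail_lt_exp {n : ℕ} (hn : n ≠ 0) {p δ : ℝ} (hp0 : 0 < p)
    (hp1 : p ≤ 1) (hδ : 0 < δ) :
    ∑ k ∈ univ.filter (fun k : Fin (n + 1) => (1 + δ) * (n * p) ≤ k), binomialWeight n p k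
      < exp (-(δ ^ 2 * (n * p) / (2 + δ))) := by
  set μ : ℝ := n * p
  set a : ℝ := (1 + δ) * μ
  have hmarkov := sum_binomialWeight_mul_rpow_le (n := n) hp0.le hp1 (s := 1 + δ) (by linarith) a
  have hmgf : (p * (1 + δ) + (1 - p)) ^ n < exp (μ * δ) := by
    rw [show p * (1 + δ) + (1 - p) = 1 + p * δ by ring, show μ * δ = n * (p * δ) by ring]
    exact one_add_pow_lt_exp (by positivity) (by positivity) hn
  have hrpow := exp_mul_le_one_add_rpow (a := a) (by positivity) hδ.le
  calc _ < exp (μ * δ) / (1 + δ) ^ a := by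
        rw [lt_div_iff₀ (rpow_pos_of_pos (by linarith) _)]
        exact hmarkov.trans_lt hmgf
    _ ≤ exp (μ * δ) / exp (a * (2 * δ / (δ + 2))) :=
        div_le_div_of_nonneg_left (exp_pos _).le (exp_pos _) hrpow
    _ = exp (-(δ ^ 2 * μ / (2 + δ))) := by
        rw [← exp_sub]
        congr 1
        field_simp
        ring

theorem one_sub_exp_lt_binomialWeight_lowerTail {n : ℕ} (hn : n ≠ 0) {p δ : ℝ} (hp0 : 0 < p)
    (hp1 : p ≤ 1) (hδ : 0 < δ) :
    1 - exp (-(δ ^ 2 * (n * p) / (2 + δ)))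
      < ∑ k ∈ univ.filter (fun k : Fin (n + 1) => (k : ℝ) < (1 + δ) * (n * p)),
          binomialWeight n p k := by
  have hsplit := sum_filter_add_sum_filter_not univ
    (fun k : Fin (n + 1) => (k : ℝ) < (1 + δ) * (n * p)) (fun k => binomialWeight n p k)
  simp only [not_lt, sum_binomialWeight] at hsplit
  linarith [binomialWeight_upperTail_lt_exp hn hp0 hp1 hδ]

set_option linter.deprecated false in
theorem PMF.binomial_toReal_apply (p : NNReal) (h : p ≤ 1) (n : ℕ) (k : Fin (n + 1)) :
    (PMF.binomial p h n k).toReal = binomialWeight n p k := by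
  have h' : (p : ENNReal) ≤ 1 := by exact_mod_cast h
  simp [PMF.binomial_apply, binomialWeight, ENNReal.toReal_sub_of_le h' ENNReal.one_ne_top]

/-- robust accuracy of a poisoned ensemble: if `X ~ Binomial(m-t, p)` counts
the clean models' errors and all `t` poisoned models err, then
`P[X < m/2 - t] > 1 - exp(-δ'² μ'/(2+δ'))` with `μ' = (m-t)p`,
`δ' = (m-2t)/(2μ') - 1`. -/
theorem safenet_robust_accuracy
    (m t : ℕ) (htm : t < m) (p : ℝ) (hp0 : 0 < p) (hp2 : p < 1/2)
    (htb : (t : ℝ) < (m : ℝ) * (1 - 2 * p) / (2 * (1 - p))) :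
    1 - Real.exp (-(((((m : ℝ) - 2 * t) / (2 * (((m : ℝ) - t) * p)) - 1)^2
          * (((m : ℝ) - t) * p))
        / (2 + ((((m : ℝ) - 2 * t) / (2 * (((m : ℝ) - t) * p))) - 1))))
      < ∑ k ∈ Finset.univ.filter (fun k : Fin (m - t + 1) => ((k : ℕ) : ℝ) < (m : ℝ) / 2 - t),
          ((PMF.binomial (Real.toNNReal p)
              (Real.toNNReal_le_one.mpr (by linarith)) (m - t)) k).toReal := by
  have hn : ((m - t : ℕ) : ℝ) = m - t := Nat.cast_sub htm.le
  have hmt : 0 < (m : ℝ) - t := sub_pos.mpr (Nat.cast_lt.mpr htm)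
  have hμ : 0 < ((m : ℝ) - t) * p := mul_pos hmt hp0
  set δ := ((m : ℝ) - 2 * t) / (2 * (((m : ℝ) - t) * p)) - 1
  have hδ : 0 < δ := by
    rw [lt_div_iff₀ (by linarith)] at htb
    rw [sub_pos, one_lt_div (by linarith)]
    linarith
  have hthreshold : (m : ℝ) / 2 - t = (1 + δ) * ((m - t : ℕ) * p) := by
    rw [hn]
    unfold δ
    field_simp [hmt.ne', hp0.ne']
    ring
  simp only [PMF.binomial_toReal_apply, Real.coe_toNNReal _ hp0.le, hthreshold]
  have := one_sub_exp_lt_binomialWeight_lowerTail (n := m - t) (by omega) hp0 (by linarith) hδ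
  rwa [hn] at this ⊢
end
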